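/- Let T ∈ ℝ, δ ∈ (0,∞), c ∈ 𝒢_{T,δ}, and κ ≥ 0. Define S(t) := (B(t) + κ)/A(t) for t ≥ T, and assume there exists T' ≥ T such that S is nondecreasing on [T', ∞). Then there exists t₀* > 0 such that for every t₀ ≥ t₀*, every ε ∈ (0, 1/4), and every smooth convex nondecreasing function v: ℝ → ℝ satisfying (i) v(t) = t for all t ≥ −t₀−ε, (ii) v is constant on (−∞, −t₀−1+ε), (iii) 0 ≤ v'(t) ≤ 1 for all t ∈ ℝ, and (iv) 0 ≤ v''(t) ≤ (1/(1−4ε))·𝟙_{(−t₀−1+ε, −t₀−ε)}(t) for all t ∈ ℝ, the inequality S(−v(t)) ≥ S(−t)·v'(t) holds for every t ∈ (−∞, −T). -/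

import Mathlib

open MeasureTheory Filter Set

/-- `Afun T δ c t = (1/δ)·c(T)e^{-T} + ∫_T^t c(t₁)e^{-t₁} dt₁`. -/
noncomputable def Afun (T δ : ℝ) (c : ℝ → ℝ) (t : ℝ) : ℝ :=
  (1 / δ) * c T * Real.exp (-T) + ∫ t₁ in T..t, c t₁ * Real.exp (-t₁)

/-- `Bfun T δ c t = ∫_T^t Afun T δ c t₂ dt₂ + (1/δ²)·c(T)e^{-T}`. -/
noncomputable def Bfun (T δ : ℝ) (c : ℝ → ℝ) (t : ℝ) : ℝ :=
  (∫ t₂ in T..t, Afun T δ c t₂) + (1 / δ ^ 2) * c T * Real.exp (-T)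

/-- The class `𝒢_{T,δ}` of Guan–Zhou: continuous positive functions `c` on `[T,∞)` with
`∫_T^∞ c(t)e^{-t} dt < ∞` satisfying the key inequality
`A(t)² > c(t)e^{-t}·B(t)` for every `t > T`. -/
def GTdelta (T δ : ℝ) (c : ℝ → ℝ) : Prop :=
  ContinuousOn c (Set.Ici T) ∧ (∀ t ∈ Set.Ici T, 0 < c t) ∧
  MeasureTheory.IntegrableOn (fun t => c t * Real.exp (-t)) (Set.Ici T) ∧
  ∀ t, T < t → (Afun T δ c t) ^ 2 > c t * Real.exp (-t) * Bfun T δ c t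

open scoped ContDiff

/-! On `[T, ∞)` the function `A` is positive, nondecreasing and bounded by some `M`, so
`S = (B + κ) / A` grows at least linearly, `S s ≥ (s - T) · A T / M`, and at most linearly,
`S y ≤ S x + R · (y - x)` with `R = M / A T`. Take `t₀` so large that `S ≥ R` beyond `t₀`.
For `t < -t₀ - ε` put `L = -t₀ - ε - t` and `d = v' t`: convexity gives
`-v t ≥ y := t₀ + ε + L d`, and `L d ≤ 1` (`d = 0` where `v` is constant, `L ≤ 1` elsewhere).
Then `S (-t) · d ≤ (S y + R L (1 - d)) · d ≤ S y ≤ S (-v t)`. -/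

lemma ConvexOn.deriv_mul_sub_le {f : ℝ → ℝ} (hf : ConvexOn ℝ univ f) {x y : ℝ} (hxy : x ≤ y)
    (hfd : DifferentiableAt ℝ f x) : deriv f x * (y - x) ≤ f y - f x := by
  rcases hxy.eq_or_lt with rfl | hlt
  · simp
  have h := hf.deriv_le_slope (mem_univ x) (mem_univ y) hlt hfd
  rwa [slope_def_field, le_div_iff₀ (sub_pos.2 hlt)] at h

lemma mul_le_of_monotoneOn_of_le_add_mul {S : ℝ → ℝ} {τ R x L d z : ℝ}
    (hmono : MonotoneOn S (Ici τ)) (hR : 0 ≤ R) (hge : ∀ s, τ ≤ s → R ≤ S s)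
    (hlip : ∀ a b, τ ≤ a → a ≤ b → S b ≤ S a + R * (b - a))
    (hx : τ ≤ x) (hL : 0 ≤ L) (hd₀ : 0 ≤ d) (hd₁ : d ≤ 1) (hLd : L * d ≤ 1)
    (hz : x + L * d ≤ z) : S (x + L) * d ≤ S z := by
  have hy : τ ≤ x + L * d := le_add_of_le_of_nonneg hx (mul_nonneg hL hd₀)
  have h_up : S (x + L) ≤ S (x + L * d) + R * (L * (1 - d)) := by
    have := hlip _ (x + L) hy (by nlinarith)
    convert this using 3; ring
  have h_down : S (x + L * d) ≤ S z := hmono hy (hy.trans hz) hz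
  have h_big : R * (L * d) ≤ S (x + L * d) := by
    nlinarith [hge _ hy]
  -- S (x + L d) - S (x + L) d ≥ (1 - d) (S (x + L d) - R L d) ≥ 0
  nlinarith [mul_le_mul_of_nonneg_right h_up hd₀, mul_nonneg (sub_nonneg.2 hd₁) (sub_nonneg.2 h_big)]

section Afun

variable {T δ : ℝ} {c : ℝ → ℝ}

lemma intervalIntegrable_mul_exp_neg (hcont : ContinuousOn c (Ici T)) {x y : ℝ}
    (hx : T ≤ x) (hy : T ≤ y) :
    IntervalIntegrable (fun t => c t * Real.exp (-t)) volume x y := by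
  refine ((hcont.mono ?_).mul (Real.continuous_exp.comp continuous_neg).continuousOn)
    |>.intervalIntegrable
  exact ordConnected_Ici.uIcc_subset hx hy

lemma Afun_add_integral (hcont : ContinuousOn c (Ici T)) {x y : ℝ} (hx : T ≤ x) (hy : T ≤ y) :
    Afun T δ c y = Afun T δ c x + ∫ t in x..y, c t * Real.exp (-t) := by
  rw [Afun, Afun, add_assoc, intervalIntegral.integral_add_adjacent_intervals
    (intervalIntegrable_mul_exp_neg hcont le_rfl hx) (intervalIntegrable_mul_exp_neg hcont hx hy)]

lemma monotoneOn_Afun (hcont : ContinuousOn c (Ici T)) (hpos : ∀ t ∈ Ici T, 0 < c t) :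
    MonotoneOn (Afun T δ c) (Ici T) := by
  intro x hx y hy hxy
  rw [Afun_add_integral hcont hx hy, le_add_iff_nonneg_right]
  exact intervalIntegral.integral_nonneg hxy fun t ht =>
    mul_nonneg (hpos t (hx.trans ht.1)).le (Real.exp_pos _).le

lemma Afun_pos (hδ : 0 < δ) (hcont : ContinuousOn c (Ici T)) (hpos : ∀ t ∈ Ici T, 0 < c t)
    {x : ℝ} (hx : T ≤ x) : 0 < Afun T δ c x := by
  have hT : 0 < Afun T δ c T := by
    have := hpos T self_mem_Ici
    rw [Afun, intervalIntegral.integral_same, add_zero]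
    positivity
  exact hT.trans_le (monotoneOn_Afun hcont hpos self_mem_Ici hx hx)

lemma bddAbove_Afun (hpos : ∀ t ∈ Ici T, 0 < c t)
    (hint : IntegrableOn (fun t => c t * Real.exp (-t)) (Ici T)) :
    BddAbove (Afun T δ c '' Ici T) := by
  refine ⟨(1 / δ) * c T * Real.exp (-T) + ∫ t in Ici T, c t * Real.exp (-t), ?_⟩
  rintro _ ⟨x, hx, rfl⟩
  rw [Afun, intervalIntegral.integral_of_le hx, add_le_add_iff_left]
  refine setIntegral_mono_set hint ?_ (Ioc_subset_Ioi_self.trans Ioi_subset_Ici_self).eventuallyLE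
  filter_upwards [ae_restrict_mem measurableSet_Ici] with t ht
  exact mul_nonneg (hpos t ht).le (Real.exp_pos _).le

lemma intervalIntegrable_Afun (hcont : ContinuousOn c (Ici T)) (hpos : ∀ t ∈ Ici T, 0 < c t)
    {x y : ℝ} (hx : T ≤ x) (hy : T ≤ y) : IntervalIntegrable (Afun T δ c) volume x y :=
  ((monotoneOn_Afun hcont hpos).mono (ordConnected_Ici.uIcc_subset hx hy)).intervalIntegrable

lemma Bfun_add_integral (hcont : ContinuousOn c (Ici T)) (hpos : ∀ t ∈ Ici T, 0 < c t)
    {x y : ℝ} (hx : T ≤ x) (hy : T ≤ y) :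
    Bfun T δ c y = Bfun T δ c x + ∫ t in x..y, Afun T δ c t := by
  rw [Bfun, Bfun, add_right_comm, intervalIntegral.integral_add_adjacent_intervals
    (intervalIntegrable_Afun hcont hpos le_rfl hx) (intervalIntegrable_Afun hcont hpos hx hy)]

lemma integral_Afun_le {M : ℝ} (hcont : ContinuousOn c (Ici T)) (hpos : ∀ t ∈ Ici T, 0 < c t)
    (hM : M ∈ upperBounds (Afun T δ c '' Ici T)) {x y : ℝ} (hx : T ≤ x) (hxy : x ≤ y) :
    ∫ t in x..y, Afun T δ c t ≤ (y - x) * M := by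
  simpa using intervalIntegral.integral_mono_on hxy
    (intervalIntegrable_Afun hcont hpos hx (hx.trans hxy)) intervalIntegrable_const
    fun t ht => hM (mem_image_of_mem _ (hx.trans ht.1))

lemma mul_Afun_le_integral (hcont : ContinuousOn c (Ici T)) (hpos : ∀ t ∈ Ici T, 0 < c t)
    {x y : ℝ} (hx : T ≤ x) (hxy : x ≤ y) :
    (y - x) * Afun T δ c x ≤ ∫ t in x..y, Afun T δ c t := by
  simpa using intervalIntegral.integral_mono_on hxy intervalIntegrable_const
    (intervalIntegrable_Afun hcont hpos hx (hx.trans hxy))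
    fun t ht => monotoneOn_Afun hcont hpos hx (hx.trans ht.1) ht.1

lemma Bfun_nonneg (hδ : 0 < δ) (hcont : ContinuousOn c (Ici T)) (hpos : ∀ t ∈ Ici T, 0 < c t)
    {x : ℝ} (hx : T ≤ x) : 0 ≤ Bfun T δ c x := by
  have := hpos T self_mem_Ici
  refine add_nonneg (intervalIntegral.integral_nonneg hx fun t ht => ?_) (by positivity)
  exact (Afun_pos hδ hcont hpos ht.1).le

end Afun

section Sfun

noncomputable def Sfun (T δ : ℝ) (c : ℝ → ℝ) (κ t : ℝ) : ℝ :=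
  (Bfun T δ c t + κ) / Afun T δ c t

variable {T δ κ : ℝ} {c : ℝ → ℝ}

lemma Sfun_nonneg (hδ : 0 < δ) (hcont : ContinuousOn c (Ici T)) (hpos : ∀ t ∈ Ici T, 0 < c t)
    (hκ : 0 ≤ κ) {x : ℝ} (hx : T ≤ x) : 0 ≤ Sfun T δ c κ x :=
  div_nonneg (add_nonneg (Bfun_nonneg hδ hcont hpos hx) hκ) (Afun_pos hδ hcont hpos hx).le

lemma Sfun_le_add_mul {M : ℝ} (hδ : 0 < δ) (hcont : ContinuousOn c (Ici T))
    (hpos : ∀ t ∈ Ici T, 0 < c t) (hκ : 0 ≤ κ) (hM : M ∈ upperBounds (Afun T δ c '' Ici T))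
    {x y : ℝ} (hx : T ≤ x) (hxy : x ≤ y) :
    Sfun T δ c κ y ≤ Sfun T δ c κ x + M / Afun T δ c T * (y - x) := by
  have hy := hx.trans hxy
  have hAx := Afun_pos hδ hcont hpos hx
  have hM₀ : 0 ≤ M := hAx.le.trans (hM (mem_image_of_mem _ hx))
  calc Sfun T δ c κ y ≤ (Bfun T δ c y + κ) / Afun T δ c x :=
        div_le_div_of_nonneg_left (add_nonneg (Bfun_nonneg hδ hcont hpos hy) hκ) hAx
          (monotoneOn_Afun hcont hpos hx hy hxy)
    _ = Sfun T δ c κ x + (∫ t in x..y, Afun T δ c t) / Afun T δ c x := by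
        rw [Sfun, Bfun_add_integral hcont hpos hx hy]; ring
    _ ≤ Sfun T δ c κ x + (y - x) * M / Afun T δ c T := by
        have : 0 ≤ (y - x) * M := mul_nonneg (sub_nonneg.2 hxy) hM₀
        gcongr
        · exact Afun_pos hδ hcont hpos le_rfl
        · exact integral_Afun_le hcont hpos hM hx hxy
        · exact monotoneOn_Afun hcont hpos self_mem_Ici hx hx
    _ = Sfun T δ c κ x + M / Afun T δ c T * (y - x) := by ring

lemma mul_div_le_Sfun {M : ℝ} (hδ : 0 < δ) (hcont : ContinuousOn c (Ici T))
    (hpos : ∀ t ∈ Ici T, 0 < c t) (hκ : 0 ≤ κ) (hM : M ∈ upperBounds (Afun T δ c '' Ici T))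
    {s : ℝ} (hs : T ≤ s) : (s - T) * (Afun T δ c T / M) ≤ Sfun T δ c κ s := by
  have hcT := hpos T self_mem_Ici
  have hAs := Afun_pos hδ hcont hpos hs
  calc (s - T) * (Afun T δ c T / M) ≤ (s - T) * Afun T δ c T / Afun T δ c s := by
        rw [← mul_div_assoc]
        gcongr
        · exact mul_nonneg (sub_nonneg.2 hs) (Afun_pos hδ hcont hpos le_rfl).le
        · exact hM (mem_image_of_mem _ hs)
    _ ≤ Sfun T δ c κ s := by
        rw [Sfun, Bfun]
        gcongr
        have := mul_Afun_le_integral (δ := δ) hcont hpos le_rfl hs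
        have : 0 ≤ 1 / δ ^ 2 * c T * Real.exp (-T) := by positivity
        linarith

lemma le_Sfun_of_add_sq_le {M : ℝ} (hδ : 0 < δ) (hcont : ContinuousOn c (Ici T))
    (hpos : ∀ t ∈ Ici T, 0 < c t) (hκ : 0 ≤ κ) (hM : M ∈ upperBounds (Afun T δ c '' Ici T))
    {s : ℝ} (hs : T + (M / Afun T δ c T) ^ 2 ≤ s) : M / Afun T δ c T ≤ Sfun T δ c κ s := by
  set R := M / Afun T δ c T
  have hAT := Afun_pos hδ hcont hpos le_rfl
  have hR : 0 < R := div_pos (hAT.trans_le (hM (mem_image_of_mem _ self_mem_Ici))) hAT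
  refine le_trans ?_ (mul_div_le_Sfun hδ hcont hpos hκ hM (by nlinarith))
  rw [← inv_div, ← div_eq_mul_inv, le_div_iff₀ hR]
  nlinarith

end Sfun

theorem S_inequality_along_cutoff_general (T δ : ℝ) (hδ : 0 < δ) (c : ℝ → ℝ) (hc : GTdelta T δ c)
    (κ : ℝ) (hκ : 0 ≤ κ) (S : ℝ → ℝ)
    (hS : ∀ t, S t = (Bfun T δ c t + κ) / Afun T δ c t)
    (T' : ℝ) (hSmono : MonotoneOn S (Set.Ici T')) :
    ∃ t₀star : ℝ, 0 < t₀star ∧ ∀ t₀, t₀star ≤ t₀ → ∀ ε ∈ Set.Ioo (0 : ℝ) (1 / 4),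
      ∀ v : ℝ → ℝ, ContDiff ℝ ∞ v → ConvexOn ℝ Set.univ v → Monotone v →
        (∀ t, -t₀ - ε ≤ t → v t = t) →
        (∀ s ∈ Set.Iio (-t₀ - 1 + ε), ∀ t ∈ Set.Iio (-t₀ - 1 + ε), v s = v t) →
        (∀ t, 0 ≤ deriv v t ∧ deriv v t ≤ 1) →
        (∀ t, 0 ≤ deriv (deriv v) t ∧ deriv (deriv v) t ≤
          (1 / (1 - 4 * ε)) *
            Set.indicator (Set.Ioo (-t₀ - 1 + ε) (-t₀ - ε)) (fun _ => (1 : ℝ)) t) →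
        ∀ t, t < -T → S (-t) * deriv v t ≤ S (-v t) := by
  obtain ⟨hcont, hpos, hint, -⟩ := hc
  obtain rfl : S = Sfun T δ c κ := funext hS
  obtain ⟨M, hM⟩ := bddAbove_Afun (δ := δ) hpos hint
  set R := M / Afun T δ c T
  have hAT := Afun_pos hδ hcont hpos le_rfl
  have hR : 0 ≤ R := div_nonneg (hAT.le.trans (hM (mem_image_of_mem _ self_mem_Ici))) hAT.le
  refine ⟨max (max (T + R ^ 2) T') 1, by positivity, ?_⟩
  rintro t₀ ht₀ ε ⟨hε₀, -⟩ v hv hconv - hid hconst hv' - t ht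
  obtain ⟨⟨ht₀R, ht₀T'⟩, -⟩ : (T + R ^ 2 ≤ t₀ ∧ T' ≤ t₀) ∧ 1 ≤ t₀ := by simpa using ht₀
  have hTt₀ : T ≤ t₀ := (le_add_of_nonneg_right (sq_nonneg R)).trans ht₀R
  rcases le_or_gt (-t₀ - ε) t with hle | hlt
  · rw [hid t hle]
    exact mul_le_of_le_one_right (Sfun_nonneg hδ hcont hpos hκ (by linarith)) (hv' t).2
  have hLd : (-t₀ - ε - t) * deriv v t ≤ 1 := by
    rcases lt_or_ge t (-t₀ - 1 + ε) with hfar | hnear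
    · have : v =ᶠ[nhds t] fun _ => v t :=
        eventually_of_mem (Iio_mem_nhds hfar) fun s hs => hconst s hs t hfar
      rw [this.deriv_eq, deriv_const, mul_zero]; exact zero_le_one
    · nlinarith [hv' t]
  have htan := hconv.deriv_mul_sub_le hlt.le (hv.differentiable (by simp) t)
  rw [hid _ le_rfl] at htan
  have key := mul_le_of_monotoneOn_of_le_add_mul (x := t₀ + ε) (z := -v t)
    (hSmono.mono (Ici_subset_Ici.2 (by linarith))) hR
    (fun s hs => le_Sfun_of_add_sq_le hδ hcont hpos hκ hM (by linarith))
    (fun a b ha hab => Sfun_le_add_mul hδ hcont hpos hκ hM (by linarith) hab)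
    le_rfl (by linarith) (hv' t).1 (hv' t).2 hLd (by linarith)
  convert key using 3; ring

/-- **Key inequality for `S(−v_{t₀,ε}(t))`** (Lemma on the cut-off functions).
For `c ∈ 𝒢_{T,δ}`, `κ ≥ 0`, `S(t) = (B(t)+κ)/A(t)`, if `S` is nondecreasing on some
`[T',∞)`, then there is `t₀* > 0` such that for all `t₀ ≥ t₀*`, `ε ∈ (0,1/4)` and every
smooth convex nondecreasing `v : ℝ → ℝ` with (i) `v(t) = t` for `t ≥ −t₀−ε`,
(ii) `v` constant on `(−∞,−t₀−1+ε)`, (iii) `0 ≤ v' ≤ 1`,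
(iv) `0 ≤ v'' ≤ (1/(1−4ε))·𝟙_{(−t₀−1+ε,−t₀−ε)}`, one has
`S(−v(t)) ≥ S(−t)·v'(t)` for every `t < −T`. -/
theorem S_inequality_along_cutoff (T δ : ℝ) (hδ : 0 < δ) (c : ℝ → ℝ) (hc : GTdelta T δ c)
    (κ : ℝ) (hκ : 0 ≤ κ) (S : ℝ → ℝ)
    (hS : ∀ t, S t = (Bfun T δ c t + κ) / Afun T δ c t)
    (T' : ℝ) (hT' : T ≤ T') (hSmono : MonotoneOn S (Set.Ici T')) :
    ∃ t₀star : ℝ, 0 < t₀star ∧ ∀ t₀, t₀star ≤ t₀ → ∀ ε ∈ Set.Ioo (0 : ℝ) (1 / 4),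
      ∀ v : ℝ → ℝ, ContDiff ℝ ∞ v → ConvexOn ℝ Set.univ v → Monotone v →
        (∀ t, -t₀ - ε ≤ t → v t = t) →
        (∀ s ∈ Set.Iio (-t₀ - 1 + ε), ∀ t ∈ Set.Iio (-t₀ - 1 + ε), v s = v t) →
        (∀ t, 0 ≤ deriv v t ∧ deriv v t ≤ 1) →
        (∀ t, 0 ≤ deriv (deriv v) t ∧ deriv (deriv v) t ≤
          (1 / (1 - 4 * ε)) *
            Set.indicator (Set.Ioo (-t₀ - 1 + ε) (-t₀ - ε)) (fun _ => (1 : ℝ)) t) →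
        ∀ t, t < -T → S (-t) * deriv v t ≤ S (-v t) :=
  S_inequality_along_cutoff_general T δ hδ c hc κ hκ S hS T' hSmono
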